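/- arXiv:1709.05761 — 2 statements merged into one kernel-verified Lean document; each statement's English description precedes it below -/
import Mathlib

section
/- Let B ⊇ A be as in the Galois setup with group G, let q be a prime of B with inertia group I_q, and let j : B^{I_q} → B be the inclusion. Then the only prime of B mapping under Spec(B) → Spec(B^{I_q}) to q ∩ B^{I_q} is q itself. -/
/-- The inertia group condition: `σ` acts trivially on the residue ring `B ⧸ q`. -/
def IsInertia (A K L B : Type*) [CommRing A] [CommRing B] [Algebra A B] [Field K] [Field L]
    [Algebra A K] [IsFractionRing A K] [Algebra B L] [Algebra K L] [Algebra A L]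
    [IsScalarTower A B L] [IsScalarTower A K L] [IsIntegralClosure B A L]
    [FiniteDimensional K L] (q : Ideal B) (σ : L ≃ₐ[K] L) : Prop :=
  ∀ b : B, galRestrict A K L B σ b - b ∈ q

/-- The subring `B^{I_q}` of elements of `B` fixed by the inertia group of `q`,
as a subalgebra of `B` over `A`. -/
def inertiaFixed (A K L B : Type*) [CommRing A] [CommRing B] [Algebra A B] [Field K] [Field L]
    [Algebra A K] [IsFractionRing A K] [Algebra B L] [Algebra K L] [Algebra A L]
    [IsScalarTower A B L] [IsScalarTower A K L] [IsIntegralClosure B A L]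
    [FiniteDimensional K L] (q : Ideal B) : Subalgebra A B where
  carrier := {b : B | ∀ σ : L ≃ₐ[K] L, IsInertia A K L B q σ → galRestrict A K L B σ b = b}
  mul_mem' {a b} ha hb σ hσ := by
    rw [map_mul, ha σ hσ, hb σ hσ]
  add_mem' {a b} ha hb σ hσ := by
    rw [map_add, ha σ hσ, hb σ hσ]
  algebraMap_mem' a σ _ := (galRestrict A K L B σ).commutes a

/-- In the AKLB Galois setup, with `I_q` the inertia group of a prime `q` of `B` and
`j : B^{I_q} → B` the inclusion, the only prime of `B` mapping under
`Spec B → Spec B^{I_q}` to `q ∩ B^{I_q}` is `q` itself. -/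
theorem statement1
    (A K L B : Type*) [CommRing A] [IsDomain A] [IsIntegrallyClosed A] [CommRing B]
    [Algebra A B] [Field K] [Field L] [Algebra A K] [IsFractionRing A K] [Algebra B L]
    [Algebra K L] [Algebra A L] [IsScalarTower A B L] [IsScalarTower A K L]
    [IsIntegralClosure B A L] [FiniteDimensional K L] [IsGalois K L]
    (q : Ideal B) [q.IsPrime]
    (q' : Ideal B) [q'.IsPrime]
    (h : Ideal.comap (inertiaFixed A K L B q).val q' =
         Ideal.comap (inertiaFixed A K L B q).val q) :
    q' = q := by
  classical
  set S := inertiaFixed A K L B q with hSdef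
  set f : (L ≃ₐ[K] L) → (B ≃ₐ[A] B) := fun σ => galRestrict A K L B σ with hfdef
  -- inertia elements fix q setwise
  have hfix : ∀ σ, IsInertia A K L B q σ → ∀ b : B, f σ b ∈ q ↔ b ∈ q := by
    intro σ hσ b
    constructor
    · intro hb
      have hb' : b = f σ b - (f σ b - b) := by ring
      rw [hb']; exact Ideal.sub_mem q hb (hσ b)
    · intro hb
      have hb' : f σ b = (f σ b - b) + b := by ring
      rw [hb']; exact Ideal.add_mem q (hσ b) hb
  have hone : IsInertia A K L B q 1 := by
    intro b
    simp only [f, map_one, AlgEquiv.one_apply, sub_self]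
    exact q.zero_mem
  have hmul : ∀ σ τ, IsInertia A K L B q σ → IsInertia A K L B q τ →
      IsInertia A K L B q (σ * τ) := by
    intro σ τ hσ hτ b
    have key : f (σ * τ) b - b = (f σ (f τ b) - f τ b) + (f τ b - b) := by
      have : f (σ * τ) b = f σ (f τ b) := by
        show galRestrict A K L B (σ * τ) b = _
        rw [map_mul]; rfl
      rw [this]; ring
    rw [key]; exact Ideal.add_mem q (hσ _) (hτ b)
  have hinv : ∀ σ, IsInertia A K L B q σ → IsInertia A K L B q σ⁻¹ := by
    intro σ hσ b
    have h1 : f σ (f σ⁻¹ b) = b := by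
      show galRestrict A K L B σ (galRestrict A K L B σ⁻¹ b) = b
      rw [← AlgEquiv.mul_apply, ← map_mul, mul_inv_cancel, map_one, AlgEquiv.one_apply]
    have : f σ⁻¹ b - b = -(f σ (f σ⁻¹ b) - f σ⁻¹ b) := by rw [h1]; ring
    rw [this]; exact neg_mem (hσ _)
  have : FiniteDimensional K L := inferInstance
  let Hs : Finset (L ≃ₐ[K] L) := Finset.univ.filter (IsInertia A K L B q)
  have hmemHs : ∀ σ, σ ∈ Hs ↔ IsInertia A K L B q σ := by
    intro σ; simp [Hs]
  -- every element of q' lies in some comap (f σ) q, σ inertia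
  have hsub : (q' : Set B) ⊆ ⋃ σ ∈ (Hs : Set (L ≃ₐ[K] L)), ((Ideal.comap (f σ) q : Ideal B) : Set B) := by
    intro x hx
    set y : B := ∏ σ ∈ Hs, f σ x with hydef
    have hyS : y ∈ S := by
      show ∀ τ : L ≃ₐ[K] L, IsInertia A K L B q τ → galRestrict A K L B τ y = y
      intro τ hτ
      have : galRestrict A K L B τ y = ∏ σ ∈ Hs, f τ (f σ x) := by
        exact map_prod (galRestrict A K L B τ) _ Hs
      rw [this]
      refine Finset.prod_nbij' (fun σ => τ * σ) (fun ρ => τ⁻¹ * ρ) ?_ ?_ ?_ ?_ ?_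
      · intro σ hσ
        rw [hmemHs] at hσ ⊢
        exact hmul τ σ hτ hσ
      · intro ρ hρ
        rw [hmemHs] at hρ ⊢
        exact hmul τ⁻¹ ρ (hinv τ hτ) hρ
      · intro σ _; group
      · intro ρ _; group
      · intro σ _
        show galRestrict A K L B τ (galRestrict A K L B σ x) = galRestrict A K L B (τ * σ) x
        rw [← AlgEquiv.mul_apply, ← map_mul]
    have hyq' : y ∈ q' := by
      have h1Hs : (1 : L ≃ₐ[K] L) ∈ Hs := (hmemHs 1).mpr hone
      rw [hydef, ← Finset.prod_erase_mul Hs _ h1Hs]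
      have hfx : f 1 x = x := by
        show galRestrict A K L B 1 x = x
        rw [map_one, AlgEquiv.one_apply]
      rw [hfx]
      exact Ideal.mul_mem_left q' _ hx
    have hyq : y ∈ q := by
      have : (⟨y, hyS⟩ : S) ∈ Ideal.comap S.val q' := hyq'
      rw [h] at this
      exact this
    have : ∃ σ ∈ Hs, f σ x ∈ q := Ideal.IsPrime.prod_mem_iff.mp hyq
    obtain ⟨σ, hσ, hmem⟩ := this
    exact Set.mem_biUnion hσ hmem
  obtain ⟨σ, hσHs, hle⟩ := (Ideal.subset_union_prime 1 1
    (fun i _ _ _ => Ideal.IsPrime.comap (f i : B →+* B))).mp hsub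
  have hσI : IsInertia A K L B q σ := (hmemHs σ).mp hσHs
  have hPq : Ideal.comap ((f σ : B →+* B)) q = q := by
    ext b
    exact hfix σ hσI b
  rw [hPq] at hle
  -- now q' ≤ q and they have the same contraction to S; integrality forces equality
  by_contra hne
  have hlt : q' < q := lt_of_le_of_ne hle hne
  obtain ⟨hle', x, hxq, hxq'⟩ := SetLike.lt_iff_le_and_exists.mp hlt
  haveI : Algebra.IsIntegral A B := IsIntegralClosure.isIntegral_algebra A L
  have hint : IsIntegral (↥S) x := IsIntegral.tower_top (Algebra.IsIntegral.isIntegral (R := A) x)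
  have := Ideal.comap_lt_comap_of_integral_mem_sdiff (R := ↥S) hle ⟨hxq, hxq'⟩ hint
  have h2 : Ideal.comap (algebraMap (↥S) B) q' = Ideal.comap (algebraMap (↥S) B) q := h
  rw [h2] at this
  exact lt_irrefl _ this
end

section
/- With notation as in the Galois setup, let q be a prime of B with inertia group I_q, and suppose the characteristic of the residue field k(q) does not divide |G|. Then k(q) = k(q ∩ B^{I_q}), i.e., the residue field extension from the inertia invariant ring to B at q is trivial. -/
section Aux
open scoped Classical

variable (A K L B : Type*) [CommRing A] [CommRing B] [Algebra A B] [Field K] [Field L]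
    [Algebra A K] [IsFractionRing A K] [Algebra B L] [Algebra K L] [Algebra A L]
    [IsScalarTower A B L] [IsScalarTower A K L] [IsIntegralClosure B A L]
    [FiniteDimensional K L] (q : Ideal B)

/-- The inertia group as a subgroup of the Galois group. -/
def inertiaSubgroup : Subgroup (L ≃ₐ[K] L) where
  carrier := {σ | IsInertia A K L B q σ}
  one_mem' b := by simp
  mul_mem' {σ τ} hσ hτ b := by
    have h1 := hσ (galRestrict A K L B τ b)
    have h2 := hτ b
    have : galRestrict A K L B (σ * τ) b - b =
        (galRestrict A K L B σ (galRestrict A K L B τ b) - galRestrict A K L B τ b)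
          + (galRestrict A K L B τ b - b) := by
      rw [map_mul, AlgEquiv.mul_apply]; ring
    rw [this]
    exact add_mem h1 h2
  inv_mem' {σ} hσ b := by
    have h1 := hσ (galRestrict A K L B σ⁻¹ b)
    have : galRestrict A K L B σ (galRestrict A K L B σ⁻¹ b) = b := by
      rw [← AlgEquiv.mul_apply, ← map_mul, mul_inv_cancel, map_one, AlgEquiv.one_apply]
    rw [this] at h1
    simpa using q.neg_mem h1

end Aux

/-- In the AKLB Galois setup, if the characteristic of the residue field `k(q)` does not
divide `|G|`, then `k(q) = k(q ∩ B^{I_q})`: the residue field extension from the inertia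
invariant ring to `B` at `q` is trivial (the natural map is bijective). -/
theorem statement2
    (A K L B : Type*) [CommRing A] [IsDomain A] [IsIntegrallyClosed A] [CommRing B]
    [Algebra A B] [Field K] [Field L] [Algebra A K] [IsFractionRing A K] [Algebra B L]
    [Algebra K L] [Algebra A L] [IsScalarTower A B L] [IsScalarTower A K L]
    [IsIntegralClosure B A L] [FiniteDimensional K L] [IsGalois K L]
    (q : Ideal B) [q.IsPrime]
    (qI : Ideal (inertiaFixed A K L B q))
    (hqI : qI = Ideal.comap (inertiaFixed A K L B q).val q)
    -- the residue characteristic does not divide the order of the Galois group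
    (hchar : ¬ (ringChar (B ⧸ q) ∣ Nat.card (L ≃ₐ[K] L)))
    -- `kq` is the residue field of `q`, `kI` is the residue field of `q ∩ B^{I_q}`
    (kI kq : Type*) [Field kI] [Field kq]
    [Algebra ((inertiaFixed A K L B q) ⧸ qI) kI]
    [IsFractionRing ((inertiaFixed A K L B q) ⧸ qI) kI]
    [Algebra (B ⧸ q) kq] [IsFractionRing (B ⧸ q) kq]
    [Algebra kI kq]
    (hcompat : ∀ b : inertiaFixed A K L B q,
      algebraMap kI kq (algebraMap ((inertiaFixed A K L B q) ⧸ qI) kI (Ideal.Quotient.mk qI b)) =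
        algebraMap (B ⧸ q) kq (Ideal.Quotient.mk q (b : B))) :
    Function.Bijective (algebraMap kI kq) := by
  classical
  haveI : Fintype (L ≃ₐ[K] L) := AlgEquiv.fintype K L
  set I := inertiaSubgroup A K L B q with hI
  set n : ℕ := Nat.card I with hn
  set g : kI →+* kq := algebraMap kI kq with hg
  set f : (B ⧸ q) →+* kq := algebraMap (B ⧸ q) kq with hf
  have hdvd : n ∣ Nat.card (L ≃ₐ[K] L) := Subgroup.card_subgroup_dvd_card I
  have hcharn : ¬ ringChar (B ⧸ q) ∣ n := fun h => hchar (h.trans hdvd)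
  have hinj : Function.Injective f := IsFractionRing.injective _ _
  have hn0 : (n : kq) ≠ 0 := by
    have h1 : (n : B ⧸ q) ≠ 0 := by
      rw [Ne, CharP.cast_eq_zero_iff (B ⧸ q) (ringChar (B ⧸ q)) n]
      exact hcharn
    intro h
    apply h1
    apply hinj
    rw [map_natCast, h, map_zero]
  refine ⟨g.injective, ?_⟩
  have key : ∀ b : B, f (Ideal.Quotient.mk q b) ∈ g.fieldRange := by
    intro b
    set s : B := ∑ σ : I, galRestrict A K L B (σ : L ≃ₐ[K] L) b with hs
    have hsR : s ∈ inertiaFixed A K L B q := by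
      intro τ hτ
      rw [hs, map_sum]
      refine Fintype.sum_equiv (Equiv.mulLeft (⟨τ, hτ⟩ : I)) _ _ ?_
      intro σ
      rw [Equiv.coe_mulLeft, Subgroup.coe_mul, map_mul, AlgEquiv.mul_apply]
    have hmod : Ideal.Quotient.mk q s = (n : B ⧸ q) * Ideal.Quotient.mk q b := by
      have hsub : s - n • b ∈ q := by
        have : s - n • b = ∑ σ : I, (galRestrict A K L B (σ : L ≃ₐ[K] L) b - b) := by
          rw [Finset.sum_sub_distrib, ← hs, Finset.sum_const, Finset.card_univ,
            hn, Nat.card_eq_fintype_card]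
        rw [this]
        exact Ideal.sum_mem _ (fun σ _ => σ.2 b)
      have := (Ideal.Quotient.mk_eq_mk_iff_sub_mem (I := q) s (n • b)).mpr hsub
      rw [this, map_nsmul, nsmul_eq_mul]
    -- the two elements of kI
    set u : kI := algebraMap ((inertiaFixed A K L B q) ⧸ qI) kI (Ideal.Quotient.mk qI (n : inertiaFixed A K L B q)) with hu
    set w : kI := algebraMap ((inertiaFixed A K L B q) ⧸ qI) kI (Ideal.Quotient.mk qI ⟨s, hsR⟩) with hw
    have hgu : g u = (n : kq) := by
      rw [hu, hcompat (n : inertiaFixed A K L B q)]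
      have : (((n : inertiaFixed A K L B q)) : B) = (n : B) := by
        simp
      rw [this, map_natCast, map_natCast]
    have hgw : g w = (n : kq) * f (Ideal.Quotient.mk q b) := by
      rw [hw, hcompat ⟨s, hsR⟩]
      show f (Ideal.Quotient.mk q s) = _
      rw [hmod, map_mul, map_natCast]
    have hu0 : u ≠ 0 := by
      intro h
      rw [h, map_zero] at hgu
      exact hn0 hgu.symm
    refine ⟨w * u⁻¹, ?_⟩
    rw [map_mul, map_inv₀, hgw, hgu, mul_comm (n : kq), mul_assoc,
      mul_inv_cancel₀ hn0, mul_one]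
  intro x
  obtain ⟨a, b', -, rfl⟩ := IsFractionRing.div_surjective (A := B ⧸ q) x
  obtain ⟨a0, rfl⟩ := Ideal.Quotient.mk_surjective a
  obtain ⟨b0, rfl⟩ := Ideal.Quotient.mk_surjective b'
  obtain ⟨y, hy⟩ := Subfield.div_mem _ (key a0) (key b0)
  exact ⟨y, hy⟩
end
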